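/- For every a ∈ I^im and every (ν,J) ∈ RC(∞): κ_a(ν,J) = 0 if and only if κ_a^*(ν,J) = 0. -/

import Mathlib

/-! Rigged configurations for generalized Kac–Moody (Borcherds) algebras. -/

/-- A Borcherds–Cartan matrix: integer matrix with `A a a = 2` or `A a a` nonpositive even,
nonpositive off-diagonal entries, and `A a b = 0 ↔ A b a = 0`. -/
structure IsBorcherdsCartan {I : Type*} (A : I → I → ℤ) : Prop where
  diag : ∀ a, A a a = 2 ∨ (A a a ≤ 0 ∧ Even (A a a))
  offdiag : ∀ a b, a ≠ b → A a b ≤ 0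
  zero_iff : ∀ a b, A a b = 0 ↔ A b a = 0

/-- A (raw) rigged configuration: for each color `a ∈ I`, a multiset of pairs
`(row length, rigging)`.  Rows of length `0` with rigging `0` are treated implicitly by the
operators below. -/
abbrev RCraw (I : Type*) := I → Multiset (ℕ × ℤ)

variable {I : Type*} [DecidableEq I]

/-- The empty rigged configuration `(ν_∅, J_∅)`. -/
def emptyRC : RCraw I := fun _ => 0

/-- `|ν^(b)|`, the number of boxes of color `b`. -/
def rcSize (ν : RCraw I) (b : I) : ℤ := ((ν b).map fun p => (p.1 : ℤ)).sum

/-- The vacancy number `p_i^(a) = -∑_b A a b ∑_{rows j of ν^(b)} min i j`. -/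
noncomputable def vac (A : I → I → ℤ) (ν : RCraw I) (a : I) (i : ℕ) : ℤ :=
  -∑ᶠ b, A a b * ((ν b).map fun p => (min i p.1 : ℤ)).sum

/-- The limiting vacancy number `p_∞^(a) = -∑_b A a b |ν^(b)| = ⟨h_a, wt(ν,J)⟩`. -/
noncomputable def pInf (A : I → I → ℤ) (ν : RCraw I) (a : I) : ℤ :=
  -∑ᶠ b, A a b * rcSize ν b

/-- Minimum of a multiset of integers together with `0` (the rigging of the implicit
length-`0` rows). -/
def minWith0 (s : Multiset ℤ) : ℤ := s.fold min 0

/-- Minimum of a nonempty multiset of integers (junk value `0` on the empty multiset). -/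
def minPosRows (s : Multiset ℤ) : ℤ := s.fold min (s.fold max 0)

/-- Maximum of a multiset of naturals together with `0`. -/
def maxWith0 (s : Multiset ℕ) : ℕ := s.fold max 0

/-- Minimum of a nonempty multiset of naturals (junk value on the empty multiset). -/
def minPosRowsN (s : Multiset ℕ) : ℕ := s.fold min (s.fold max 0)

/-- The crystal operator `f_a` on rigged configurations: add a box to a row of maximal
length among the rows of `ν^(a)` whose rigging equals the smallest rigging `x` (with the
length-`0` rows of rigging `0` included), give the new row the rigging `x - A a a / 2`, and
change all other riggings so that the coriggings are preserved. -/
def fOp (A : I → I → ℤ) (a : I) (ν : RCraw I) : RCraw I :=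
  let M := ν a
  let x := minWith0 (M.map Prod.snd)
  let ℓ := maxWith0 ((M.filter fun p => p.2 = x).map Prod.fst)
  fun b =>
    let adj : Multiset (ℕ × ℤ) → Multiset (ℕ × ℤ) :=
      Multiset.map fun p => (p.1, p.2 - if ℓ < p.1 then A b a else 0)
    if b = a then adj (M.erase (ℓ, x)) + {(ℓ + 1, x - A a a / 2)} else adj (ν b)

/-- Auxiliary for `eOp`: remove a box from a row of minimal (positive) length among the
rows of `ν^(a)` with rigging `x`, give it the rigging `x + A a a / 2` (dropping the row if
its length becomes `0`), and change all other riggings so that the coriggings are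
preserved. -/
def eRemove (A : I → I → ℤ) (a : I) (ν : RCraw I) (x : ℤ) : RCraw I :=
  let M := ν a
  let ℓ := minPosRowsN ((M.filter fun p => p.2 = x).map Prod.fst)
  fun b =>
    let adj : Multiset (ℕ × ℤ) → Multiset (ℕ × ℤ) :=
      Multiset.map fun p => (p.1, p.2 + if ℓ ≤ p.1 then A b a else 0)
    if b = a then
      adj (M.erase (ℓ, x)) + (if ℓ = 1 then 0 else {(ℓ - 1, x + A a a / 2)})
    else adj (ν b)

/-- The crystal operator `e_a` on rigged configurations. -/
def eOp (A : I → I → ℤ) (a : I) (ν : RCraw I) : Option (RCraw I) :=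
  if A a a = 2 then
    let x := minWith0 ((ν a).map Prod.snd)
    if x = 0 then none else some (eRemove A a ν x)
  else
    if ν a = 0 ∨ minPosRows ((ν a).map Prod.snd) ≠ -A a a / 2 then none
    else some (eRemove A a ν (-A a a / 2))

/-- The multiset of coriggings `p_i^(a) - x` of the (positive length) rows of `ν^(a)`. -/
noncomputable def corigs (A : I → I → ℤ) (ν : RCraw I) (a : I) : Multiset ℤ :=
  (ν a).map fun p => vac A ν a p.1 - p.2

open scoped Classical in
/-- The star crystal operator `f_a^*`: add a box to a row of maximal length among the rows
of `ν^(a)` whose corigging equals the smallest corigging `x` (with the length-`0` rows of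
corigging `0` included), set the rigging of the new row so that its corigging is
`x - A a a / 2`, and keep all other riggings fixed. -/
noncomputable def fStar (A : I → I → ℤ) (a : I) (ν : RCraw I) : RCraw I :=
  let M := ν a
  let x := minWith0 (corigs A ν a)
  let ℓ := maxWith0 ((M.filter fun p => vac A ν a p.1 - p.2 = x).map Prod.fst)
  fun b =>
    if b = a then
      M.erase (ℓ, vac A ν a ℓ - x) + {(ℓ + 1, (vac A ν a (ℓ + 1) - A a a) - (x - A a a / 2))}
    else ν b

open scoped Classical in
/-- Auxiliary for `eStarOp`: remove a box from a row of minimal (positive) length among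
the rows of `ν^(a)` with corigging `x`, set its rigging so that its corigging is
`x - A a a / 2` (dropping the row if its length becomes `0`), and keep all other riggings
fixed. -/
noncomputable def eStarRemove (A : I → I → ℤ) (a : I) (ν : RCraw I) (x : ℤ) : RCraw I :=
  let M := ν a
  let ℓ := minPosRowsN ((M.filter fun p => vac A ν a p.1 - p.2 = x).map Prod.fst)
  fun b =>
    if b = a then
      M.erase (ℓ, vac A ν a ℓ - x) +
        (if ℓ = 1 then 0 else {(ℓ - 1, vac A ν a (ℓ - 1) - (x - A a a / 2))})
    else ν b

/-- The star crystal operator `e_a^*`. -/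
noncomputable def eStarOp (A : I → I → ℤ) (a : I) (ν : RCraw I) : Option (RCraw I) :=
  if A a a = 2 then
    let x := minWith0 (corigs A ν a)
    if x = 0 then none else some (eStarRemove A a ν x)
  else
    if ν a = 0 ∨ minPosRows (corigs A ν a) ≠ -A a a / 2 then none
    else some (eStarRemove A a ν (-A a a / 2))

/-- `RC(∞)`: the set of rigged configurations generated from the empty rigged
configuration by the operators `e_a`, `f_a`. -/
inductive RCinf (A : I → I → ℤ) : RCraw I → Prop
  | empty : RCinf A emptyRC
  | fstep (a : I) (ν : RCraw I) : RCinf A ν → RCinf A (fOp A a ν)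
  | estep (a : I) (ν ν' : RCraw I) : RCinf A ν → eOp A a ν = some ν' → RCinf A ν'

/-- `RC(∞)^*`: the set of rigged configurations generated from the empty rigged
configuration by the operators `e_a^*`, `f_a^*`. -/
inductive RCinfStar (A : I → I → ℤ) : RCraw I → Prop
  | empty : RCinfStar A emptyRC
  | fstep (a : I) (ν : RCraw I) : RCinfStar A ν → RCinfStar A (fStar A a ν)
  | estep (a : I) (ν ν' : RCraw I) : RCinfStar A ν → eStarOp A a ν = some ν' → RCinfStar A ν'

/-- Iteration of a partial map. -/
def iterOpt {α : Type*} (g : α → Option α) : ℕ → α → Option α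
  | 0, v => some v
  | k + 1, v => (iterOpt g k v).bind g

/-- `tε_a(ν,J) = max {k | e_a^k (ν,J) ≠ 0}`. -/
noncomputable def teRC (A : I → I → ℤ) (a : I) (ν : RCraw I) : ℕ :=
  sSup {k | iterOpt (eOp A a) k ν ≠ none}

/-- `tε_a^*(ν,J) = max {k | (e_a^*)^k (ν,J) ≠ 0}`. -/
noncomputable def teStarRC (A : I → I → ℤ) (a : I) (ν : RCraw I) : ℕ :=
  sSup {k | iterOpt (eStarOp A a) k ν ≠ none}

/-- `ε_a`: for real `a` the maximal number of applications of `e_a`, for imaginary `a`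
zero. -/
noncomputable def epsRC (A : I → I → ℤ) (a : I) (ν : RCraw I) : ℤ :=
  if A a a = 2 then (teRC A a ν : ℤ) else 0

/-- `φ_a(ν,J) = ⟨h_a, wt(ν,J)⟩ + ε_a(ν,J)`. -/
noncomputable def phiRC (A : I → I → ℤ) (a : I) (ν : RCraw I) : ℤ :=
  pInf A ν a + epsRC A a ν

/-- `ε_a^*`: for real `a` the maximal number of applications of `e_a^*`, for imaginary `a`
zero. -/
noncomputable def epsStarRC (A : I → I → ℤ) (a : I) (ν : RCraw I) : ℤ :=
  if A a a = 2 then (teStarRC A a ν : ℤ) else 0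

/-- `φ_a^*(ν,J) = ⟨h_a, wt(ν,J)⟩ + ε_a^*(ν,J)`. -/
noncomputable def phiStarRC (A : I → I → ℤ) (a : I) (ν : RCraw I) : ℤ :=
  pInf A ν a + epsStarRC A a ν

/-- The weight of a rigged configuration, as the coefficient function of
`-∑_a |ν^(a)| α_a`. -/
def wtRC (ν : RCraw I) : I → ℤ := fun b => -rcSize ν b

/-- For imaginary `a`, `κ_a(ν,J) = tε_a^*(ν,J)·A a a + ⟨h_a, wt(ν,J)⟩`. -/
noncomputable def kappaRC (A : I → I → ℤ) (a : I) (ν : RCraw I) : ℤ :=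
  (teStarRC A a ν : ℤ) * A a a + pInf A ν a

/-- For imaginary `a`, `κ_a^*(ν,J) = tε_a(ν,J)·A a a + ⟨h_a, wt(ν,J)⟩`. -/
noncomputable def kappaStarRC (A : I → I → ℤ) (a : I) (ν : RCraw I) : ℤ :=
  (teRC A a ν : ℤ) * A a a + pInf A ν a

/-!
Write `s = |ν^(a)|` and `A a a = -2d` with `d > 0` (for `A a a = 0` both sides are
`⟨h_a, wt⟩`). Since `A a b ≤ 0` for `b ≠ a`, `p_∞^(a) ≥ 2ds`, with equality iff no colour `b`
with `A a b ≠ 0` carries a box. Each of `e_a`, `e_a^*` removes one box from `ν^(a)`, so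
`tε_a, tε_a^* ≤ s`, and `κ_a = 0` (resp. `κ_a^* = 0`) says exactly that `p_∞^(a) = 2ds` and
`tε_a^* = s` (resp. `tε_a = s`). Both conditions single out the same `ν^(a)`: `s` rows of
length one with riggings `d, 3d, …, (2s-1)d`. Indeed `e_a` can only remove a whole row of
rigging `d` and lowers the remaining riggings by `2d`, while, with `p_1^(a) = 2ds` once `a` is
isolated, the coriggings of that configuration are again `d, 3d, …, (2s-1)d`.
-/

namespace Multiset

variable {α : Type*} [LinearOrder α]

theorem fold_min_le_of_mem {s : Multiset α} {x : α} (h : x ∈ s) (b : α) :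
    s.fold min b ≤ x := by
  induction s using Multiset.induction_on with
  | empty => simp at h
  | cons y s ih =>
    rw [fold_cons_left]
    rcases mem_cons.mp h with rfl | h
    · exact min_le_left _ _
    · exact (min_le_right _ _).trans (ih h)

theorem le_fold_max_of_mem {s : Multiset α} {x : α} (h : x ∈ s) (b : α) :
    x ≤ s.fold max b :=
  fold_min_le_of_mem (α := αᵒᵈ) h b

theorem fold_min_mem_or (s : Multiset α) (b : α) : s.fold min b ∈ s ∨ s.fold min b = b := by
  induction s using Multiset.induction_on with
  | empty => simp
  | cons y s ih =>
    rw [fold_cons_left]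
    rcases le_total y (s.fold min b) with h | h
    · rw [min_eq_left h]
      exact .inl (mem_cons_self y s)
    · rw [min_eq_right h]
      exact ih.imp_left (mem_cons_of_mem ·)

theorem fold_min_fold_max_mem {s : Multiset α} (h : s ≠ 0) (b : α) :
    s.fold min (s.fold max b) ∈ s := by
  obtain ⟨x, hx⟩ := exists_mem_of_ne_zero h
  rcases fold_min_mem_or s (s.fold max b) with hmem | heq
  · exact hmem
  · have : s.fold min (s.fold max b) = x :=
      le_antisymm (fold_min_le_of_mem hx _) (heq.symm ▸ le_fold_max_of_mem hx b)
    exact this ▸ hx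

end Multiset

theorem minWith0_mem {s : Multiset ℤ} (h : minWith0 s ≠ 0) : minWith0 s ∈ s :=
  (s.fold_min_mem_or 0).resolve_right h

theorem minPosRows_mem {s : Multiset ℤ} (h : s ≠ 0) : minPosRows s ∈ s :=
  Multiset.fold_min_fold_max_mem h 0

theorem minPosRows_eq_of_mem {s : Multiset ℤ} {m : ℤ} (hm : m ∈ s) (h : ∀ x ∈ s, m ≤ x) :
    minPosRows s = m :=
  le_antisymm (Multiset.fold_min_le_of_mem hm _) (h _ (minPosRows_mem (by rintro rfl; simp at hm)))

theorem minPosRowsN_singleton (n : ℕ) : minPosRowsN {n} = n := by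
  simp [minPosRowsN, Multiset.fold_singleton]

theorem exists_mem_filter_fst_eq_minPosRowsN {M : Multiset (ℕ × ℤ)} {P : ℕ × ℤ → Prop}
    [DecidablePred P] {p : ℕ × ℤ} (hp : p ∈ M) (hP : P p) :
    ∃ q ∈ M, P q ∧ q.1 = minPosRowsN ((M.filter P).map Prod.fst) := by
  have hne : (M.filter P).map Prod.fst ≠ 0 := by
    simp only [ne_eq, Multiset.map_eq_zero, Multiset.filter_eq_nil, not_forall, not_not]
    exact ⟨p, hp, hP⟩
  obtain ⟨q, hq, hq1⟩ := Multiset.mem_map.mp (Multiset.fold_min_fold_max_mem hne 0)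
  exact ⟨q, (Multiset.mem_filter.mp hq).1, (Multiset.mem_filter.mp hq).2, hq1⟩

theorem iterOpt_succ' {α : Type*} (g : α → Option α) (k : ℕ) (v : α) :
    iterOpt g (k + 1) v = (g v).bind (iterOpt g k) := by
  induction k generalizing v with
  | zero => simp [iterOpt]
  | succ k ih =>
    change (iterOpt g (k + 1) v).bind g = _
    rw [ih]
    cases g v <;> rfl

theorem Nat.sSup_eq_iff_mem {S : Set ℕ} {n : ℕ} (hS : S.Nonempty) (hn : ∀ k ∈ S, k ≤ n) :
    sSup S = n ↔ n ∈ S :=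
  ⟨fun h => h ▸ Nat.sSup_mem hS ⟨n, hn⟩,
    fun h => le_antisymm (csSup_le hS hn) (le_csSup ⟨n, hn⟩ h)⟩

def numBoxes (M : Multiset (ℕ × ℤ)) : ℕ := (M.map Prod.fst).sum

@[simp] theorem numBoxes_zero : numBoxes 0 = 0 := rfl

@[simp] theorem numBoxes_cons (p : ℕ × ℤ) (M : Multiset (ℕ × ℤ)) :
    numBoxes (p ::ₘ M) = p.1 + numBoxes M := by
  simp [numBoxes]

@[simp] theorem numBoxes_add (M N : Multiset (ℕ × ℤ)) :
    numBoxes (M + N) = numBoxes M + numBoxes N := by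
  simp [numBoxes]

@[simp] theorem numBoxes_singleton (p : ℕ × ℤ) : numBoxes {p} = p.1 := by
  simp [numBoxes]

theorem numBoxes_map {φ : ℕ × ℤ → ℕ × ℤ} (hφ : ∀ p, (φ p).1 = p.1) (M : Multiset (ℕ × ℤ)) :
    numBoxes (M.map φ) = numBoxes M := by
  simp [numBoxes, hφ]

theorem rcSize_eq_numBoxes {I : Type*} (ν : RCraw I) (b : I) :
    rcSize ν b = numBoxes (ν b) := by
  simp [rcSize, numBoxes, Nat.cast_multiset_sum]

def RowsPos (M : Multiset (ℕ × ℤ)) : Prop := ∀ p ∈ M, 1 ≤ p.1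

theorem RowsPos.eq_zero_of_numBoxes_eq_zero {M : Multiset (ℕ × ℤ)} (hM : RowsPos M)
    (h : numBoxes M = 0) : M = 0 := by
  refine Multiset.eq_zero_of_forall_notMem fun p hp => ?_
  rw [← Multiset.cons_erase hp, numBoxes_cons] at h
  have := hM p hp
  omega

theorem RowsPos.map {M : Multiset (ℕ × ℤ)} (hM : RowsPos M) {φ : ℕ × ℤ → ℕ × ℤ}
    (hφ : ∀ p, (φ p).1 = p.1) : RowsPos (M.map φ) := by
  intro p hp
  obtain ⟨q, hq, rfl⟩ := Multiset.mem_map.mp hp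
  exact (hφ q).symm ▸ hM q hq

section Shorten

variable {M : Multiset (ℕ × ℤ)} {φ : ℕ × ℤ → ℕ × ℤ} {ℓ : ℕ} {r r' : ℤ}

theorem RowsPos.erase_map_add (hM : RowsPos M) (hφ : ∀ p, (φ p).1 = p.1) (hmem : (ℓ, r) ∈ M) :
    RowsPos ((M.erase (ℓ, r)).map φ + if ℓ = 1 then 0 else {(ℓ - 1, r')}) := by
  have hℓ : 1 ≤ ℓ := hM _ hmem
  intro p hp
  rcases Multiset.mem_add.mp hp with hp | hp
  · obtain ⟨q, hq, rfl⟩ := Multiset.mem_map.mp hp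
    exact (hφ q).symm ▸ hM q (Multiset.mem_of_mem_erase hq)
  · split_ifs at hp with h1
    · simp at hp
    · rw [Multiset.mem_singleton.mp hp]
      omega

theorem numBoxes_erase_map_add (hM : RowsPos M) (hφ : ∀ p, (φ p).1 = p.1)
    (hmem : (ℓ, r) ∈ M) :
    numBoxes ((M.erase (ℓ, r)).map φ + if ℓ = 1 then 0 else {(ℓ - 1, r')}) + 1 =
      numBoxes M := by
  have hℓ : 1 ≤ ℓ := hM _ hmem
  conv_rhs => rw [← Multiset.cons_erase hmem]
  rw [numBoxes_add, numBoxes_map hφ, numBoxes_cons]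
  split_ifs with h1 <;> simp <;> omega

end Shorten

def AllRowsPos {I : Type*} (ν : RCraw I) : Prop := ∀ b, RowsPos (ν b)

/-- The length of the row shortened by `eRemove A a ν x`. -/
def eLen {I : Type*} (a : I) (ν : RCraw I) (x : ℤ) : ℕ :=
  minPosRowsN (((ν a).filter fun p => p.2 = x).map Prod.fst)

/-- The length of the row shortened by `eStarRemove A a ν x`. -/
noncomputable def eStarLen {I : Type*} (A : I → I → ℤ) (a : I) (ν : RCraw I) (x : ℤ) : ℕ :=
  minPosRowsN (((ν a).filter fun p => vac A ν a p.1 - p.2 = x).map Prod.fst)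

theorem eLen_mem {I : Type*} {a : I} {ν : RCraw I} {x : ℤ} (hx : x ∈ (ν a).map Prod.snd) :
    (eLen a ν x, x) ∈ ν a := by
  obtain ⟨p, hp, rfl⟩ := Multiset.mem_map.mp hx
  obtain ⟨q, hq, hqx, hq1⟩ :=
    exists_mem_filter_fst_eq_minPosRowsN (P := fun q => q.2 = p.2) hp rfl
  rwa [eLen, ← hq1, ← hqx]

theorem eStarLen_mem {I : Type*} {A : I → I → ℤ} {a : I} {ν : RCraw I} {x : ℤ}
    (hx : x ∈ corigs A ν a) :
    (eStarLen A a ν x, vac A ν a (eStarLen A a ν x) - x) ∈ ν a := by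
  obtain ⟨p, hp, hpx⟩ := Multiset.mem_map.mp hx
  obtain ⟨q, hq, hqx, hq1⟩ :=
    exists_mem_filter_fst_eq_minPosRowsN (P := fun q => vac A ν a q.1 - q.2 = x) hp hpx
  have hq1 : q.1 = eStarLen A a ν x := hq1
  have : q = (eStarLen A a ν x, vac A ν a (eStarLen A a ν x) - x) :=
    Prod.ext hq1 (by rw [← hq1, ← hqx]; ring)
  exact this ▸ hq

section Removal

variable {A : I → I → ℤ} {a : I} {ν ν' : RCraw I} {x : ℤ}

theorem eRemove_apply_self :
    eRemove A a ν x a =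
      ((ν a).erase (eLen a ν x, x)).map
          (fun p => (p.1, p.2 + if eLen a ν x ≤ p.1 then A a a else 0)) +
        if eLen a ν x = 1 then 0 else {(eLen a ν x - 1, x + A a a / 2)} := by
  dsimp only [eRemove]
  rw [if_pos rfl]
  rfl

theorem eRemove_apply_of_ne {b : I} (hb : b ≠ a) :
    eRemove A a ν x b =
      (ν b).map fun p => (p.1, p.2 + if eLen a ν x ≤ p.1 then A b a else 0) := by
  dsimp only [eRemove]
  rw [if_neg hb]
  rfl

theorem eStarRemove_apply_self :
    eStarRemove A a ν x a =
      (ν a).erase (eStarLen A a ν x, vac A ν a (eStarLen A a ν x) - x) +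
        if eStarLen A a ν x = 1 then 0
        else {(eStarLen A a ν x - 1, vac A ν a (eStarLen A a ν x - 1) - (x - A a a / 2))} := by
  dsimp only [eStarRemove]
  rw [if_pos rfl]
  rfl

theorem eStarRemove_apply_of_ne {b : I} (hb : b ≠ a) : eStarRemove A a ν x b = ν b := by
  simp [eStarRemove, hb]

theorem AllRowsPos.eRemove (hpos : AllRowsPos ν) (hx : x ∈ (ν a).map Prod.snd) :
    AllRowsPos (eRemove A a ν x) := by
  intro b
  by_cases hb : b = a
  · subst hb
    rw [eRemove_apply_self]
    exact (hpos b).erase_map_add (fun _ => rfl) (eLen_mem hx)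
  · rw [eRemove_apply_of_ne hb]
    exact (hpos b).map fun _ => rfl

theorem numBoxes_eRemove (hpos : AllRowsPos ν) (hx : x ∈ (ν a).map Prod.snd) :
    numBoxes (eRemove A a ν x a) + 1 = numBoxes (ν a) := by
  rw [eRemove_apply_self]
  exact numBoxes_erase_map_add (hpos a) (fun _ => rfl) (eLen_mem hx)

theorem AllRowsPos.eStarRemove (hpos : AllRowsPos ν) (hx : x ∈ corigs A ν a) :
    AllRowsPos (eStarRemove A a ν x) := by
  intro b
  by_cases hb : b = a
  · subst hb
    rw [eStarRemove_apply_self, ← Multiset.map_id ((ν b).erase _)]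
    exact (hpos b).erase_map_add (fun _ => rfl) (eStarLen_mem hx)
  · rw [eStarRemove_apply_of_ne hb]
    exact hpos b

theorem numBoxes_eStarRemove (hpos : AllRowsPos ν) (hx : x ∈ corigs A ν a) :
    numBoxes (eStarRemove A a ν x a) + 1 = numBoxes (ν a) := by
  rw [eStarRemove_apply_self, ← Multiset.map_id ((ν a).erase _)]
  exact numBoxes_erase_map_add (hpos a) (fun _ => rfl) (eStarLen_mem hx)

theorem eOp_eq_some_iff (h2 : A a a ≠ 2) :
    eOp A a ν = some ν' ↔
      ν a ≠ 0 ∧ minPosRows ((ν a).map Prod.snd) = -A a a / 2 ∧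
        eRemove A a ν (-A a a / 2) = ν' := by
  simp only [eOp, if_neg h2]
  split_ifs with hc <;> simp <;> tauto

theorem eStarOp_eq_some_iff (h2 : A a a ≠ 2) :
    eStarOp A a ν = some ν' ↔
      ν a ≠ 0 ∧ minPosRows (corigs A ν a) = -A a a / 2 ∧
        eStarRemove A a ν (-A a a / 2) = ν' := by
  simp only [eStarOp, if_neg h2]
  split_ifs with hc <;> simp <;> tauto

theorem exists_eRemove_eq_of_eOp_eq_some (h : eOp A a ν = some ν') :
    ∃ x ∈ (ν a).map Prod.snd, eRemove A a ν x = ν' := by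
  by_cases h2 : A a a = 2
  · simp only [eOp, if_pos h2] at h
    split_ifs at h with hx
    exact ⟨_, minWith0_mem hx, Option.some_injective _ h⟩
  · obtain ⟨hne, hmin, rfl⟩ := (eOp_eq_some_iff h2).mp h
    exact ⟨_, hmin ▸ minPosRows_mem (by simpa using hne), rfl⟩

theorem exists_eStarRemove_eq_of_eStarOp_eq_some (h : eStarOp A a ν = some ν') :
    ∃ x ∈ corigs A ν a, eStarRemove A a ν x = ν' := by
  by_cases h2 : A a a = 2
  · simp only [eStarOp, if_pos h2] at h
    split_ifs at h with hx
    exact ⟨_, minWith0_mem hx, Option.some_injective _ h⟩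
  · obtain ⟨hne, hmin, rfl⟩ := (eStarOp_eq_some_iff h2).mp h
    exact ⟨_, hmin ▸ minPosRows_mem (by simpa [corigs] using hne), rfl⟩

end Removal

def RemovesBox {I : Type*} (a : I) (g : RCraw I → Option (RCraw I)) : Prop :=
  ∀ ν ν', AllRowsPos ν → g ν = some ν' → AllRowsPos ν' ∧ numBoxes (ν' a) + 1 = numBoxes (ν a)

namespace RemovesBox

variable {I : Type*} {a : I} {g : RCraw I → Option (RCraw I)} {ν : RCraw I}

theorem numBoxes_iterOpt (hg : RemovesBox a g) {k : ℕ} {ν' : RCraw I} (hpos : AllRowsPos ν)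
    (h : iterOpt g k ν = some ν') : numBoxes (ν' a) + k = numBoxes (ν a) := by
  induction k generalizing ν with
  | zero => cases Option.some_injective _ h; rfl
  | succ k ih =>
    rw [iterOpt_succ'] at h
    obtain ⟨ν₁, hν₁, h⟩ := Option.bind_eq_some_iff.mp h
    obtain ⟨hpos₁, hsize⟩ := hg ν ν₁ hpos hν₁
    have := ih hpos₁ h
    omega

theorem le_numBoxes (hg : RemovesBox a g) (hpos : AllRowsPos ν) {k : ℕ}
    (h : iterOpt g k ν ≠ none) : k ≤ numBoxes (ν a) := by
  obtain ⟨ν', hν'⟩ := Option.ne_none_iff_exists'.mp h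
  have := hg.numBoxes_iterOpt hpos hν'
  omega

theorem sSup_le (hg : RemovesBox a g) (hpos : AllRowsPos ν) :
    sSup {k | iterOpt g k ν ≠ none} ≤ numBoxes (ν a) :=
  csSup_le ⟨0, by simp [iterOpt]⟩ fun _ => hg.le_numBoxes hpos

theorem sSup_eq_iff (hg : RemovesBox a g) (hpos : AllRowsPos ν) :
    sSup {k | iterOpt g k ν ≠ none} = numBoxes (ν a) ↔ iterOpt g (numBoxes (ν a)) ν ≠ none :=
  Nat.sSup_eq_iff_mem ⟨0, by simp [iterOpt]⟩ fun _ => hg.le_numBoxes hpos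

end RemovesBox

section RCinf

variable {A : I → I → ℤ} {a : I} {ν : RCraw I}

theorem eOp_removesBox : RemovesBox a (eOp A a) := by
  intro ν ν' hpos h
  obtain ⟨x, hx, rfl⟩ := exists_eRemove_eq_of_eOp_eq_some h
  exact ⟨hpos.eRemove hx, numBoxes_eRemove hpos hx⟩

theorem eStarOp_removesBox : RemovesBox a (eStarOp A a) := by
  intro ν ν' hpos h
  obtain ⟨x, hx, rfl⟩ := exists_eStarRemove_eq_of_eStarOp_eq_some h
  exact ⟨hpos.eStarRemove hx, numBoxes_eStarRemove hpos hx⟩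

theorem AllRowsPos.fOp (hpos : AllRowsPos ν) : AllRowsPos (fOp A a ν) := by
  intro b p hp
  by_cases hb : b = a
  · subst hb
    simp only [_root_.fOp, if_pos rfl, Multiset.mem_add, Multiset.mem_singleton] at hp
    rcases hp with hp | rfl
    · obtain ⟨q, hq, rfl⟩ := Multiset.mem_map.mp hp
      exact hpos b q (Multiset.mem_of_mem_erase hq)
    · exact Nat.le_add_left 1 _
  · simp only [_root_.fOp, if_neg hb] at hp
    obtain ⟨q, hq, rfl⟩ := Multiset.mem_map.mp hp
    exact hpos b q hq

theorem RCinf.allRowsPos (h : RCinf A ν) : AllRowsPos ν := by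
  induction h with
  | empty => intro b p hp; simp [emptyRC] at hp
  | fstep a ν _ ih => exact ih.fOp
  | estep a ν ν' _ he ih => exact (eOp_removesBox ν ν' ih he).1

theorem Set.Finite.support_of_eq_zero {I : Type*} {ν ν' : RCraw I} (a : I)
    (hfin : {b | ν b ≠ 0}.Finite) (h : ∀ b ≠ a, ν b = 0 → ν' b = 0) :
    {b | ν' b ≠ 0}.Finite :=
  (hfin.insert a).subset fun b hb => by
    by_cases hba : b = a
    · exact .inl hba
    · exact .inr fun h0 => hb (h b hba h0)

theorem RCinf.finite_support (h : RCinf A ν) : {b | ν b ≠ 0}.Finite := by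
  induction h with
  | empty => simp [emptyRC]
  | fstep a ν _ ih =>
    exact ih.support_of_eq_zero a fun b hb h0 => by simp [fOp, hb, h0]
  | estep a ν ν' _ he ih =>
    obtain ⟨x, -, rfl⟩ := exists_eRemove_eq_of_eOp_eq_some he
    exact ih.support_of_eq_zero a fun b hb h0 => by simp [eRemove_apply_of_ne hb, h0]

end RCinf

def Isolated {I : Type*} (A : I → I → ℤ) (ν : RCraw I) (a : I) : Prop :=
  ∀ b ≠ a, A a b * rcSize ν b = 0

section Vacancy

variable {A : I → I → ℤ} {a : I} {ν : RCraw I}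

theorem pInf_eq_sub_sum (hfin : {b | ν b ≠ 0}.Finite) :
    pInf A ν a = -(A a a * rcSize ν a) -
      ∑ b ∈ (insert a hfin.toFinset).erase a, A a b * rcSize ν b := by
  have hsupp : Function.support (fun b => A a b * rcSize ν b) ⊆ ↑(insert a hfin.toFinset) := by
    intro b hb
    by_cases hba : b = a
    · simp [hba]
    · have : ν b ≠ 0 := fun h0 => hb (by simp [rcSize, h0])
      simp [this]
  rw [pInf, finsum_eq_finsetSum_of_support_subset _ hsupp,
    ← Finset.add_sum_erase _ _ (Finset.mem_insert_self a _)]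
  ring

theorem neg_mul_rcSize_le_pInf (hA : ∀ b, a ≠ b → A a b ≤ 0) (hfin : {b | ν b ≠ 0}.Finite) :
    -(A a a * rcSize ν a) ≤ pInf A ν a := by
  rw [pInf_eq_sub_sum hfin, le_sub_self_iff]
  refine Finset.sum_nonpos fun b hb => mul_nonpos_of_nonpos_of_nonneg
    (hA b (Finset.ne_of_mem_erase hb).symm) ?_
  rw [rcSize_eq_numBoxes]
  positivity

theorem pInf_eq_iff_isolated (hA : ∀ b, a ≠ b → A a b ≤ 0) (hfin : {b | ν b ≠ 0}.Finite) :
    pInf A ν a = -(A a a * rcSize ν a) ↔ Isolated A ν a := by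
  have hterm : ∀ b ∈ (insert a hfin.toFinset).erase a, A a b * rcSize ν b ≤ 0 :=
    fun b hb => mul_nonpos_of_nonpos_of_nonneg (hA b (Finset.ne_of_mem_erase hb).symm)
      (by rw [rcSize_eq_numBoxes]; positivity)
  rw [pInf_eq_sub_sum hfin, sub_eq_self, Finset.sum_eq_zero_iff_of_nonpos hterm]
  refine ⟨fun h b hb => ?_, fun h b hb => h b (Finset.ne_of_mem_erase hb)⟩
  by_cases hνb : ν b = 0
  · simp [rcSize, hνb]
  · exact h b (by simp [hb, hνb])

end Vacancy

theorem vac_one {I : Type*} {A : I → I → ℤ} {a : I} {ν : RCraw I} (hpos : AllRowsPos ν)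
    (hiso : Isolated A ν a) :
    vac A ν a 1 = -(A a a * Multiset.card (ν a)) := by
  have hmin : ∀ b, ((ν b).map fun p => (min 1 p.1 : ℤ)).sum = Multiset.card (ν b) := by
    intro b
    rw [Multiset.map_congr rfl fun p hp => min_eq_left (by exact_mod_cast hpos b p hp),
      Multiset.map_const', Multiset.sum_replicate, nsmul_one]
  rw [vac, finsum_eq_single _ a fun b hb => ?_, Nat.cast_one, hmin]
  rcases mul_eq_zero.mp (hiso b hb) with h | h
  · simp [h]
  · rw [rcSize_eq_numBoxes, Nat.cast_eq_zero] at h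
    simp [(hpos b).eq_zero_of_numBoxes_eq_zero h]

def oddChain (d : ℤ) (k : ℕ) : Multiset (ℕ × ℤ) :=
  (Multiset.range k).map fun j : ℕ => (1, (2 * (j : ℤ) + 1) * d)

section OddChain

variable {d : ℤ} {k : ℕ}

theorem oddChain_succ (d : ℤ) (k : ℕ) :
    oddChain d (k + 1) = (1, (2 * (k : ℤ) + 1) * d) ::ₘ oddChain d k := by
  simp [oddChain, Multiset.range_succ]

theorem oddChain_succ' (d : ℤ) (k : ℕ) :
    oddChain d (k + 1) = (1, d) ::ₘ (oddChain d k).map fun p => (p.1, p.2 + 2 * d) := by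
  rw [add_comm, oddChain, Multiset.range_add]
  simp only [oddChain, Multiset.map_map, Multiset.range_succ, Multiset.range_zero,
    Multiset.map_cons, Multiset.cons_zero, Multiset.singleton_add]
  refine congrArg₂ _ (by simp) (Multiset.map_congr rfl fun j _ => ?_)
  simp only [Function.comp_apply, Prod.mk.injEq, true_and]
  push_cast
  ring

theorem mem_oddChain {p : ℕ × ℤ} :
    p ∈ oddChain d k ↔ ∃ j < k, p = (1, (2 * (j : ℤ) + 1) * d) := by
  simp [oddChain, eq_comm]

@[simp] theorem card_oddChain (d : ℤ) (k : ℕ) : Multiset.card (oddChain d k) = k := by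
  simp [oddChain]

theorem RowsPos.oddChain (d : ℤ) (k : ℕ) : RowsPos (oddChain d k) := by
  intro p hp
  obtain ⟨j, -, rfl⟩ := mem_oddChain.mp hp
  exact le_rfl

theorem le_snd_of_mem_oddChain (hd : 0 ≤ d) {p : ℕ × ℤ} (hp : p ∈ oddChain d k) : d ≤ p.2 := by
  obtain ⟨j, -, rfl⟩ := mem_oddChain.mp hp
  change d ≤ (2 * j + 1) * d
  nlinarith [j.cast_nonneg (α := ℤ)]

end OddChain

theorem RemovesBox.iterOpt_ne_none_iff {I : Type*} {a : I} {g : RCraw I → Option (RCraw I)}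
    {P : RCraw I → Prop} {c : ℕ → Multiset (ℕ × ℤ)} (hg : RemovesBox a g) (hc : c 0 = 0)
    (hP : ∀ ν ν', P ν → g ν = some ν' → P ν')
    (hdown : ∀ k ν, AllRowsPos ν → P ν → ν a = c (k + 1) → ∃ ν', g ν = some ν' ∧ ν' a = c k)
    (hup : ∀ k ν ν', AllRowsPos ν → P ν → g ν = some ν' → ν' a = c k → ν a = c (k + 1))
    {k : ℕ} {ν : RCraw I} (hpos : AllRowsPos ν) (hPν : P ν) (hk : numBoxes (ν a) = k) :
    iterOpt g k ν ≠ none ↔ ν a = c k := by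
  induction k generalizing ν with
  | zero => simpa [iterOpt, hc] using (hpos a).eq_zero_of_numBoxes_eq_zero hk
  | succ k ih =>
    rw [iterOpt_succ']
    constructor
    · intro h
      cases hν₁ : g ν with
      | none => simp [hν₁] at h
      | some ν₁ =>
        rw [hν₁, Option.bind_some] at h
        obtain ⟨hpos₁, hsize⟩ := hg ν ν₁ hpos hν₁
        exact hup k ν ν₁ hpos hPν hν₁ ((ih hpos₁ (hP ν ν₁ hPν hν₁) (by omega)).mp h)
    · intro hν
      obtain ⟨ν₁, hν₁, hc₁⟩ := hdown k ν hpos hPν hν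
      obtain ⟨hpos₁, hsize⟩ := hg ν ν₁ hpos hν₁
      rw [hν₁, Option.bind_some]
      exact (ih hpos₁ (hP ν ν₁ hPν hν₁) (by omega)).mpr hc₁

section Imaginary

variable {A : I → I → ℤ} {a : I} {d : ℤ} {ν ν' : RCraw I} {k : ℕ}

theorem eOp_eq_some_of_oddChain (hd : A a a = -(2 * d)) (hd0 : 0 < d)
    (hν : ν a = oddChain d (k + 1)) : ∃ ν', eOp A a ν = some ν' ∧ ν' a = oddChain d k := by
  have hhalf : -A a a / 2 = d := by omega
  have hfilter : (ν a).filter (fun p => p.2 = d) = {(1, d)} := by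
    rw [hν, oddChain_succ', Multiset.filter_cons_of_pos (p := fun q : ℕ × ℤ => q.2 = d) _ rfl,
      Multiset.filter_eq_nil.mpr]
    · rfl
    · intro p hp
      obtain ⟨q, hq, rfl⟩ := Multiset.mem_map.mp hp
      have := le_snd_of_mem_oddChain hd0.le hq
      dsimp only
      omega
  have hlen : eLen a ν d = 1 := by
    rw [eLen, hfilter, Multiset.map_singleton, minPosRowsN_singleton]
  refine ⟨eRemove A a ν d, (eOp_eq_some_iff (by omega)).mpr ⟨?_, ?_, by rw [hhalf]⟩, ?_⟩
  · simp [hν, ← Multiset.card_eq_zero]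
  · rw [hhalf, hν]
    refine minPosRows_eq_of_mem ?_ fun x hx => ?_
    · exact Multiset.mem_map.mpr ⟨(1, d), by simp [oddChain_succ'], rfl⟩
    · obtain ⟨p, hp, rfl⟩ := Multiset.mem_map.mp hx
      exact le_snd_of_mem_oddChain hd0.le hp
  · rw [eRemove_apply_self, hlen, if_pos rfl, add_zero, hν, oddChain_succ',
      Multiset.erase_cons_head, Multiset.map_map]
    conv_rhs => rw [← Multiset.map_id (oddChain d k)]
    refine Multiset.map_congr rfl fun p hp => ?_
    simp only [Function.comp_apply, if_pos (RowsPos.oddChain d k p hp), hd]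
    ext <;> simp

theorem eq_oddChain_of_eOp_eq_some (hd : A a a = -(2 * d)) (hd0 : 0 < d)
    (hpos : AllRowsPos ν) (h : eOp A a ν = some ν') (hν' : ν' a = oddChain d k) :
    ν a = oddChain d (k + 1) := by
  obtain ⟨hne, hmin, rfl⟩ := (eOp_eq_some_iff (by omega)).mp h
  rw [show -A a a / 2 = d by omega] at hmin hν'
  have hmem : (eLen a ν d, d) ∈ ν a :=
    eLen_mem (hmin ▸ minPosRows_mem (by simpa using hne))
  rw [eRemove_apply_self] at hν'
  by_cases hℓ : eLen a ν d = 1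
  · rw [hℓ] at hν' hmem
    rw [if_pos rfl, add_zero] at hν'
    have hrest : (ν a).erase (1, d) = (oddChain d k).map fun p => (p.1, p.2 + 2 * d) := by
      rw [← hν', Multiset.map_map]
      conv_lhs => rw [← Multiset.map_id ((ν a).erase (1, d))]
      refine Multiset.map_congr rfl fun p hp => ?_
      simp only [Function.comp_apply, if_pos (hpos a p (Multiset.mem_of_mem_erase hp)), hd]
      ext <;> simp
    rw [oddChain_succ', ← hrest, Multiset.cons_erase hmem]
  -- for `ℓ > 1` the new row would have rigging `d + A a a / 2 = 0 < d`
  · have hnew : (eLen a ν d - 1, d + A a a / 2) ∈ oddChain d k := by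
      rw [← hν', if_neg hℓ]
      exact Multiset.mem_add.mpr (.inr (Multiset.mem_singleton_self _))
    have := le_snd_of_mem_oddChain hd0.le hnew
    dsimp only at this
    omega

theorem eStarOp_apply_of_ne (h : eStarOp A a ν = some ν') {b : I} (hb : b ≠ a) : ν' b = ν b := by
  obtain ⟨x, -, rfl⟩ := exists_eStarRemove_eq_of_eStarOp_eq_some h
  exact eStarRemove_apply_of_ne hb

theorem Isolated.of_eStarOp_eq_some (hiso : Isolated A ν a) (h : eStarOp A a ν = some ν') :
    Isolated A ν' a := fun b hb => by
  rw [rcSize, eStarOp_apply_of_ne h hb]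
  exact hiso b hb

theorem eStarOp_eq_some_of_oddChain (hd : A a a = -(2 * d)) (hd0 : 0 < d)
    (hpos : AllRowsPos ν) (hiso : Isolated A ν a) (hν : ν a = oddChain d (k + 1)) :
    ∃ ν', eStarOp A a ν = some ν' ∧ ν' a = oddChain d k := by
  have hhalf : -A a a / 2 = d := by omega
  have hvac : vac A ν a 1 = 2 * d * (k + 1) := by
    rw [vac_one hpos hiso, hd, hν, card_oddChain]
    push_cast
    ring
  -- the row `(1, (2j+1)d)` has corigging `(2(k-j)+1)d`
  have hfilter : (ν a).filter (fun p => vac A ν a p.1 - p.2 = d) = {(1, (2 * k + 1) * d)} := by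
    rw [hν, oddChain_succ,
      Multiset.filter_cons_of_pos (p := fun q : ℕ × ℤ => vac A ν a q.1 - q.2 = d) _
        (by dsimp only; rw [hvac]; ring),
      Multiset.filter_eq_nil.mpr]
    · rfl
    · intro p hp
      obtain ⟨j, hj, rfl⟩ := mem_oddChain.mp hp
      dsimp only
      rw [hvac]
      have : (j : ℤ) + 1 ≤ k := by exact_mod_cast hj
      nlinarith
  have hlen : eStarLen A a ν d = 1 := by
    rw [eStarLen, hfilter, Multiset.map_singleton, minPosRowsN_singleton]
  refine ⟨eStarRemove A a ν d, (eStarOp_eq_some_iff (by omega)).mpr ⟨?_, ?_, by rw [hhalf]⟩, ?_⟩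
  · simp [hν, ← Multiset.card_eq_zero]
  · rw [hhalf]
    refine minPosRows_eq_of_mem ?_ fun x hx => ?_
    · refine Multiset.mem_map.mpr ⟨(1, (2 * k + 1) * d), by simp [hν, oddChain_succ], ?_⟩
      dsimp only
      rw [hvac]
      ring
    · obtain ⟨p, hp, rfl⟩ := Multiset.mem_map.mp hx
      obtain ⟨j, hj, rfl⟩ := mem_oddChain.mp (hν ▸ hp)
      dsimp only
      rw [hvac]
      have : (j : ℤ) ≤ k := by exact_mod_cast Nat.lt_succ_iff.mp hj
      nlinarith
  · rw [eStarRemove_apply_self, hlen, if_pos rfl, add_zero, hvac, hν, oddChain_succ,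
      show 2 * d * (k + 1) - d = (2 * k + 1) * d by ring, Multiset.erase_cons_head]

theorem eq_oddChain_of_eStarOp_eq_some (hd : A a a = -(2 * d)) (hd0 : 0 < d)
    (hpos : AllRowsPos ν) (hiso : Isolated A ν a) (h : eStarOp A a ν = some ν')
    (hν' : ν' a = oddChain d k) : ν a = oddChain d (k + 1) := by
  obtain ⟨hne, hmin, rfl⟩ := (eStarOp_eq_some_iff (by omega)).mp h
  rw [show -A a a / 2 = d by omega] at hmin hν'
  have hmem := eStarLen_mem (hmin ▸ minPosRows_mem (by simpa [corigs] using hne))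
  have hvac : vac A ν a 1 = 2 * d * Multiset.card (ν a) := by
    rw [vac_one hpos hiso, hd]
    ring
  rw [eStarRemove_apply_self] at hν'
  by_cases hℓ : eStarLen A a ν d = 1
  · rw [hℓ] at hν' hmem
    rw [if_pos rfl, add_zero] at hν'
    have hcard := Multiset.card_erase_add_one hmem
    rw [hν', card_oddChain] at hcard
    have hrig : vac A ν a 1 - d = (2 * k + 1) * d := by
      rw [hvac, ← hcard]
      push_cast
      ring
    rw [oddChain_succ, ← hrig, ← hν', Multiset.cons_erase hmem]
  -- for `ℓ > 1` the new row would be `(1, 2d (card (ν a) - 1))`, not an odd multiple of `d`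
  · exfalso
    rw [if_neg hℓ] at hν'
    have hnew : (eStarLen A a ν d - 1, vac A ν a (eStarLen A a ν d - 1) - (d - A a a / 2)) ∈
        oddChain d k := hν' ▸ Multiset.mem_add.mpr (.inr (Multiset.mem_singleton_self _))
    obtain ⟨j, -, hj⟩ := mem_oddChain.mp hnew
    obtain ⟨hlen, hrig⟩ := Prod.ext_iff.mp hj
    dsimp only at hlen hrig
    rw [hlen, hvac, show A a a / 2 = -d by omega] at hrig
    have : d * (2 * (Multiset.card (ν a) : ℤ) - 2 * j - 3) = 0 := by linarith
    rcases mul_eq_zero.mp this with h | h <;> omega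

end Imaginary

section Kappa

variable {A : I → I → ℤ} {a : I} {d : ℤ} {ν : RCraw I}

theorem teRC_eq_numBoxes_iff (hd : A a a = -(2 * d)) (hd0 : 0 < d) (hpos : AllRowsPos ν) :
    teRC A a ν = numBoxes (ν a) ↔ ν a = oddChain d (numBoxes (ν a)) :=
  (eOp_removesBox.sSup_eq_iff hpos).trans <|
    eOp_removesBox.iterOpt_ne_none_iff (P := fun _ => True) (c := oddChain d) rfl
      (fun _ _ _ _ => trivial)
      (fun _ _ _ _ hν => eOp_eq_some_of_oddChain hd hd0 hν)
      (fun _ _ _ hpos _ h hν' => eq_oddChain_of_eOp_eq_some hd hd0 hpos h hν') hpos trivial rfl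

theorem teStarRC_eq_numBoxes_iff (hd : A a a = -(2 * d)) (hd0 : 0 < d) (hpos : AllRowsPos ν)
    (hiso : Isolated A ν a) :
    teStarRC A a ν = numBoxes (ν a) ↔ ν a = oddChain d (numBoxes (ν a)) :=
  (eStarOp_removesBox.sSup_eq_iff hpos).trans <|
    eStarOp_removesBox.iterOpt_ne_none_iff (P := fun ν => Isolated A ν a) (c := oddChain d) rfl
      (fun _ _ hiso h => hiso.of_eStarOp_eq_some h)
      (fun _ _ hpos hiso hν => eStarOp_eq_some_of_oddChain hd hd0 hpos hiso hν)
      (fun _ _ _ hpos hiso h hν' => eq_oddChain_of_eStarOp_eq_some hd hd0 hpos hiso h hν')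
      hpos hiso rfl

theorem natCast_mul_add_pInf_eq_zero_iff (hA : ∀ b, a ≠ b → A a b ≤ 0)
    (hfin : {b | ν b ≠ 0}.Finite) (hd : A a a = -(2 * d)) (hd0 : 0 < d) {t : ℕ}
    (ht : t ≤ numBoxes (ν a)) :
    (t : ℤ) * A a a + pInf A ν a = 0 ↔ Isolated A ν a ∧ t = numBoxes (ν a) := by
  have hle := neg_mul_rcSize_le_pInf hA hfin
  rw [← pInf_eq_iff_isolated hA hfin]
  rw [rcSize_eq_numBoxes, hd] at hle ⊢
  have ht' : (t : ℤ) ≤ numBoxes (ν a) := by exact_mod_cast ht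
  constructor
  · intro h
    have htn : (t : ℤ) = numBoxes (ν a) := by nlinarith
    exact ⟨by rw [← htn]; linarith, by exact_mod_cast htn⟩
  · rintro ⟨h, rfl⟩
    linarith

end Kappa

/-- For imaginary `a` and `(ν,J) ∈ RC(∞)`: `κ_a(ν,J) = 0` iff `κ_a^*(ν,J) = 0`. -/
theorem rc_kappa_kappa_star {I : Type*} [DecidableEq I] (A : I → I → ℤ)
    (hA : IsBorcherdsCartan A) :
    ∀ a : I, A a a ≤ 0 → ∀ ν : RCraw I, RCinf A ν →
      (kappaRC A a ν = 0 ↔ kappaStarRC A a ν = 0) := by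
  intro a ha ν hν
  have hpos := hν.allRowsPos
  obtain ⟨r, hr⟩ := ((hA.diag a).resolve_left (by omega)).2
  rcases ha.lt_or_eq with hneg | hzero
  · have hd : A a a = -(2 * -r) := by omega
    have hd0 : 0 < -r := by omega
    have hfin := hν.finite_support
    rw [kappaRC, kappaStarRC,
      natCast_mul_add_pInf_eq_zero_iff (hA.offdiag a) hfin hd hd0 (t := teStarRC A a ν)
        (eStarOp_removesBox.sSup_le hpos),
      natCast_mul_add_pInf_eq_zero_iff (hA.offdiag a) hfin hd hd0 (t := teRC A a ν)
        (eOp_removesBox.sSup_le hpos)]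
    exact and_congr_right fun hiso =>
      (teStarRC_eq_numBoxes_iff hd hd0 hpos hiso).trans (teRC_eq_numBoxes_iff hd hd0 hpos).symm
  · simp [kappaRC, kappaStarRC, hzero]
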